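/- Let X be a compact uniform space and f_{0,∞} a sequence of continuous self-maps of X converging uniformly to a continuous map f. Then h(f_{0,∞}) ≤ h(f_{1,∞}) ≤ ⋯ ≤ h(f_{n,∞}) ≤ ⋯ ≤ h*(f_∞) ≤ h(f), where h*(f_∞) = lim_{n→∞} h(f_{n,∞}) is the asymptotical topological entropy. -/

import Mathlib

open Filter Set
open scoped Uniformity

/-- `itr f i n = f (i+n-1) ∘ ⋯ ∘ f i`, the composition of `n` maps of the sequence `f`
starting at index `i` (so `itr f i 0 = id`). -/
def itr {X : Type*} (f : ℕ → X → X) (i : ℕ) : ℕ → X → X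
  | 0 => id
  | n + 1 => fun x => f (i + n) (itr f i n x)

/-- `E` is an `(n,γ)`-separated set for the nonautonomous system `f`. -/
def IsSep {X : Type*} (f : ℕ → X → X) (n : ℕ) (γ : Set (X × X)) (E : Set X) : Prop :=
  ∀ x ∈ E, ∀ y ∈ E, x ≠ y → ∃ j < n, (itr f 0 j x, itr f 0 j y) ∉ γ

/-- `F` `(n,γ)`-spans the set `K` for the nonautonomous system `f`. -/
def Spans {X : Type*} (f : ℕ → X → X) (n : ℕ) (γ : Set (X × X)) (F K : Set X) : Prop :=
  ∀ x ∈ K, ∃ y ∈ F, ∀ j < n, (itr f 0 j x, itr f 0 j y) ∈ γ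

/-- Maximal cardinality of an `(n,γ)`-separated subset of `Λ`. -/
noncomputable def sepCard {X : Type*} (f : ℕ → X → X) (Λ : Set X) (n : ℕ)
    (γ : Set (X × X)) : ℕ :=
  sSup {m | ∃ E : Finset X, ↑E ⊆ Λ ∧ IsSep f n γ ↑E ∧ E.card = m}

/-- Minimal cardinality of a subset of `Λ` that `(n,γ)`-spans `Λ`. -/
noncomputable def spanCard {X : Type*} (f : ℕ → X → X) (Λ : Set X) (n : ℕ)
    (γ : Set (X × X)) : ℕ :=
  sInf {m | ∃ F : Finset X, ↑F ⊆ Λ ∧ Spans f n γ ↑F Λ ∧ F.card = m}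


/-- Topological entropy of the nonautonomous system `f` on the set `Λ`, defined via
separated sets; by antitonicity in the entourage, the supremum over all entourages agrees
with the limit along the net of symmetric open entourages used in the paper. -/
noncomputable def entropy {X : Type*} [UniformSpace X] (f : ℕ → X → X) (Λ : Set X) : EReal :=
  ⨆ γ ∈ 𝓤 X, atTop.limsup fun n : ℕ =>
    ((Real.log (sepCard f Λ n γ) / n : ℝ) : EReal)


/-! Monotonicity: split an `(n + 1, γ)`-separated set of `f_{0,∞}` along a finite partition of
`X` into `γ`-small pieces; on each piece `f 0` is injective onto an `(n, γ)`-separated set of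
`f_{1,∞}`, so the separation numbers of the two systems differ by at most a constant factor.

Bound by `h(F)`: for fixed `m`, from some time `N` on every `m`-step orbit of the sequence
`η`-shadows the `F`-orbit of its starting point. Coding each block of `m` steps by a maximal,
hence spanning, `(m, η)`-separated set of `F` gives
`sep(f_{N,∞}, n, η⁴) ≤ sep(F, m, η) ^ (n / m + 1)`, so the `η⁴`-growth rate of `f_{N,∞}` is at
most `log sep(F, m, η) / m`, whose `liminf` in `m` is at most `h(F)`. -/

open scoped SetRel Topology

section

variable {X : Type*}

theorem itr_succ' (f : ℕ → X → X) (i j : ℕ) (x : X) :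
    itr f i (j + 1) x = itr f (i + 1) j (f i x) := by
  induction j with
  | zero => rfl
  | succ j ih =>
    show f (i + (j + 1)) (itr f i (j + 1) x) = f (i + 1 + j) (itr f (i + 1) j (f i x))
    rw [ih, Nat.add_right_comm, add_assoc]

theorem itr_add (f : ℕ → X → X) (i a b : ℕ) (x : X) :
    itr f i (a + b) x = itr f (i + a) b (itr f i a x) := by
  induction b with
  | zero => rfl
  | succ b ih =>
    show f (i + (a + b)) (itr f i (a + b) x) = f (i + a + b) (itr f (i + a) b _)
    rw [ih, add_assoc]

theorem itr_shift (f : ℕ → X → X) (m i j : ℕ) :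
    itr (fun k => f (m + k)) i j = itr f (m + i) j := by
  induction j with
  | zero => rfl
  | succ j ih =>
    funext x
    show f (m + (i + j)) (itr (fun k => f (m + k)) i j x) = f (m + i + j) (itr f (m + i) j x)
    rw [ih, add_assoc]

theorem itr_const (F : X → X) (i j : ℕ) : itr (fun _ => F) i j = F^[j] := by
  induction j with
  | zero => rfl
  | succ j ih =>
    funext x
    show F (itr (fun _ => F) i j x) = F^[j + 1] x
    rw [ih, Function.iterate_succ_apply']

section Coding

variable {ι : Type*} [Fintype ι]

theorem card_le_pow_of_isSep {g : ℕ → X → X} {γ : Set (X × X)} {m n : ℕ} (hm : 0 < m)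
    (c : X → ι) (hc : ∀ i x y, c x = c y → ∀ j < m, (itr g i j x, itr g i j y) ∈ γ)
    {E : Finset X} (hE : IsSep g n γ E) :
    E.card ≤ Fintype.card ι ^ (n / m + 1) := by
  let code : E → Fin (n / m + 1) → ι := fun x q => c (itr g 0 (q * m) x)
  have hcode : Function.Injective code := by
    intro x y hxy
    by_contra hne
    obtain ⟨s, hs, hsep⟩ := hE x x.2 y y.2 (Subtype.coe_ne_coe.mpr hne)
    have hq : s / m < n / m + 1 := Nat.lt_succ_of_le (Nat.div_le_div_right hs.le)
    have hdecomp : ∀ z, itr g 0 s z = itr g (s / m * m) (s % m) (itr g 0 (s / m * m) z) := by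
      intro z
      conv_lhs => rw [← Nat.div_add_mod' s m]
      simpa using itr_add g 0 (s / m * m) (s % m) z
    rw [hdecomp, hdecomp] at hsep
    exact hsep (hc _ _ _ (congrFun hxy ⟨s / m, hq⟩) _ (Nat.mod_lt s hm))
  simpa using Fintype.card_le_of_injective code hcode

theorem sepCard_le_pow (g : ℕ → X → X) (Λ : Set X) {γ : Set (X × X)} {m : ℕ} (hm : 0 < m)
    (c : X → ι) (hc : ∀ i x y, c x = c y → ∀ j < m, (itr g i j x, itr g i j y) ∈ γ) (n : ℕ) :
    sepCard g Λ n γ ≤ Fintype.card ι ^ (n / m + 1) := by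
  refine csSup_le' ?_
  rintro _ ⟨E, -, hE, rfl⟩
  exact card_le_pow_of_isSep hm c hc hE

end Coding

theorem sepCard_le_pow_of_tracks {g : ℕ → X → X} {F : X → X} {γ η : Set (X × X)}
    [SetRel.IsSymm η] (hηγ : (η ○ η) ○ (η ○ η) ⊆ γ) {m : ℕ} (hm : 0 < m) {S : Finset X}
    (hS : Spans (fun _ => F) m η S univ) (htrack : ∀ i x, ∀ j < m, (itr g i j x, F^[j] x) ∈ η)
    (n : ℕ) : sepCard g univ n γ ≤ S.card ^ (n / m + 1) := by
  simp only [Spans, itr_const] at hS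
  choose c hcS hc using fun x => hS x (mem_univ x)
  -- `itr g i j x ~ F^[j] x ~ F^[j] (c x) = F^[j] (c y) ~ F^[j] y ~ itr g i j y`
  refine (sepCard_le_pow g univ hm (fun x => (⟨c x, hcS x⟩ : S))
    (fun i x y hxy j hj => ?_) n).trans_eq (by rw [Fintype.card_coe])
  have hxy : c x = c y := congrArg Subtype.val hxy
  refine hηγ ⟨F^[j] (c x), ⟨F^[j] x, htrack i x j hj, hc x j hj⟩, ⟨F^[j] y, ?_, ?_⟩⟩
  · rw [hxy]; exact SetRel.symm η (hc y j hj)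
  · exact SetRel.symm η (htrack i y j hj)

theorem log_natCast_le_log_natCast {a b : ℕ} (h : a ≤ b) : Real.log a ≤ Real.log b := by
  rcases a.eq_zero_or_pos with rfl | ha
  · simpa using Real.log_natCast_nonneg b
  · exact Real.log_le_log (by exact_mod_cast ha) (by exact_mod_cast h)

theorem log_natCast_mul_le (a b : ℕ) : Real.log ↑(a * b) ≤ Real.log a + Real.log b := by
  rcases Nat.eq_zero_or_pos a with rfl | ha
  · simpa using Real.log_natCast_nonneg b
  rcases Nat.eq_zero_or_pos b with rfl | hb
  · simpa using Real.log_natCast_nonneg a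
  rw [Nat.cast_mul, Real.log_mul (by positivity) (by positivity)]

theorem limsup_log_div_le_of_le_pow {a : ℕ → ℕ} {C m : ℕ} (hm : 0 < m)
    (h : ∀ n, a n ≤ C ^ (n / m + 1)) :
    atTop.limsup (fun n : ℕ => ((Real.log (a n) / n : ℝ) : EReal)) ≤
      ((Real.log C / m : ℝ) : EReal) := by
  have hbound : ∀ n : ℕ, 0 < n → Real.log (a n) / n ≤ Real.log C / m + Real.log C / n := by
    intro n hn
    have hlog : Real.log (a n) ≤ ((n / m + 1 : ℕ) : ℝ) * Real.log C := by
      simpa [Real.log_pow] using log_natCast_le_log_natCast (h n)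
    have hblocks : ((n / m + 1 : ℕ) : ℝ) ≤ n / m + 1 := by
      push_cast
      exact add_le_add_left Nat.cast_div_le 1
    calc Real.log (a n) / n ≤ ((n : ℝ) / m + 1) * Real.log C / n := by
          gcongr
          exact hlog.trans (by gcongr)
      _ = Real.log C / m + Real.log C / n := by field_simp
  have htend : Tendsto (fun n : ℕ => Real.log C / m + Real.log C / n) atTop
      (𝓝 (Real.log C / m)) := by
    simpa using tendsto_const_nhds.add (tendsto_const_div_atTop_nhds_zero_nat (Real.log C))
  calc _ ≤ atTop.limsup (fun n : ℕ => ((Real.log C / m + Real.log C / n : ℝ) : EReal)) :=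
        limsup_le_limsup <| (eventually_gt_atTop 0).mono fun n hn =>
          EReal.coe_le_coe_iff.mpr (hbound n hn)
    _ = _ := ((continuous_coe_real_ereal.tendsto _).comp htend).limsup_eq

theorem limsup_log_div_le_of_succ_le_mul {a b : ℕ → ℕ} (C : ℕ)
    (h : ∀ k, a (k + 1) ≤ C * b k) :
    atTop.limsup (fun n : ℕ => ((Real.log (a n) / n : ℝ) : EReal)) ≤
      atTop.limsup (fun n : ℕ => ((Real.log (b n) / n : ℝ) : EReal)) := by
  set w : ℕ → EReal := fun k => ((Real.log C / (k + 1) : ℝ) : EReal)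
  set v : ℕ → EReal := fun n => ((Real.log (b n) / n : ℝ) : EReal)
  have hw : Tendsto w atTop (𝓝 0) := by
    have := (tendsto_const_div_atTop_nhds_zero_nat (Real.log C)).comp (tendsto_add_atTop_nat 1)
    simpa [w, Function.comp_def] using (continuous_coe_real_ereal.tendsto _).comp this
  have hstep : ∀ k : ℕ, 0 < k →
      Real.log (a (k + 1)) / ↑(k + 1) ≤ Real.log C / (k + 1) + Real.log (b k) / k := by
    intro k hk
    push_cast
    calc Real.log (a (k + 1)) / (k + 1) ≤ (Real.log C + Real.log (b k)) / (k + 1) := by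
          gcongr
          exact (log_natCast_le_log_natCast (h k)).trans (log_natCast_mul_le C (b k))
      _ = Real.log C / (k + 1) + Real.log (b k) / (k + 1) := add_div _ _ _
      _ ≤ Real.log C / (k + 1) + Real.log (b k) / k := by
          gcongr
          linarith
  calc _ = atTop.limsup (fun k : ℕ => ((Real.log (a (k + 1)) / ↑(k + 1) : ℝ) : EReal)) :=
        (limsup_nat_add _ 1).symm
    _ ≤ atTop.limsup (w + v) :=
        limsup_le_limsup <| (eventually_gt_atTop 0).mono fun k hk => by
          simpa [w, v, ← EReal.coe_add] using hstep k hk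
    _ ≤ atTop.limsup w + atTop.limsup v :=
        EReal.limsup_add_le (.inl (by simp [hw.limsup_eq])) (.inl (by simp [hw.limsup_eq]))
    _ = atTop.limsup v := by rw [hw.limsup_eq, zero_add]

section Compact

variable [UniformSpace X] [CompactSpace X]

theorem exists_finset_code {γ : Set (X × X)} (hγ : γ ∈ 𝓤 X) :
    ∃ (t : Finset X) (c : X → t), ∀ x y, c x = c y → (x, y) ∈ γ := by
  obtain ⟨η, hη, _, hηγ⟩ := comp_symm_mem_uniformity_sets hγ
  obtain ⟨t, ht, hcover⟩ := isCompact_univ.totallyBounded η hη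
  have hnear : ∀ x, ∃ y : ht.toFinset, (x, (y : X)) ∈ η := fun x => by
    simpa using hcover (mem_univ x)
  choose c hc using hnear
  refine ⟨ht.toFinset, c, fun x y hxy => hηγ ⟨c x, hc x, ?_⟩⟩
  rw [hxy]
  exact SetRel.symm η (hc y)

theorem bddAbove_card_isSep (g : ℕ → X → X) (Λ : Set X) (n : ℕ) {γ : Set (X × X)}
    (hγ : γ ∈ 𝓤 X) :
    BddAbove {m | ∃ E : Finset X, ↑E ⊆ Λ ∧ IsSep g n γ ↑E ∧ E.card = m} := by
  obtain ⟨t, c, hc⟩ := exists_finset_code hγ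
  refine ⟨Fintype.card t ^ (n / 1 + 1), ?_⟩
  rintro _ ⟨E, -, hE, rfl⟩
  refine card_le_pow_of_isSep one_pos c (fun i x y hxy j hj => ?_) hE
  obtain rfl : j = 0 := Nat.lt_one_iff.mp hj
  exact hc x y hxy

theorem card_le_sepCard {g : ℕ → X → X} {Λ : Set X} {n : ℕ} {γ : Set (X × X)}
    (hγ : γ ∈ 𝓤 X) {E : Finset X} (hEΛ : ↑E ⊆ Λ) (hE : IsSep g n γ E) :
    E.card ≤ sepCard g Λ n γ :=
  le_csSup (bddAbove_card_isSep g Λ n hγ) ⟨E, hEΛ, hE, rfl⟩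

/-- A separated set of maximal cardinality is spanning. -/
theorem exists_spans_card_eq_sepCard (g : ℕ → X → X) (n : ℕ) {η : Set (X × X)}
    (hη : η ∈ 𝓤 X) [SetRel.IsSymm η] :
    ∃ S : Finset X, S.card = sepCard g univ n η ∧ Spans g n η S univ := by
  classical
  have hmax : sepCard g univ n η ∈
      {m | ∃ E : Finset X, ↑E ⊆ (univ : Set X) ∧ IsSep g n η ↑E ∧ E.card = m} :=
    Nat.sSup_mem ⟨0, ∅, by simp, by simp [IsSep], rfl⟩ (bddAbove_card_isSep g univ n hη)
  obtain ⟨S, -, hS, hcard⟩ := hmax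
  refine ⟨S, hcard, fun w _ => ?_⟩
  by_contra! hw
  have hwS : w ∉ S := fun h => by
    obtain ⟨j, -, hj⟩ := hw w h
    exact hj (refl_mem_uniformity hη)
  have hsep : IsSep g n η ↑(insert w S) := by
    intro x hx y hy hxy
    simp only [Finset.coe_insert, mem_insert_iff, Finset.mem_coe] at hx hy
    rcases hx with rfl | hx <;> rcases hy with rfl | hy
    · exact absurd rfl hxy
    · exact hw y hy
    · obtain ⟨j, hj, hout⟩ := hw x hx
      exact ⟨j, hj, fun h => hout (SetRel.symm η h)⟩
    · exact hS x hx y hy hxy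
  have := card_le_sepCard hη (subset_univ _) hsep
  rw [Finset.card_insert_of_notMem hwS] at this
  omega

theorem sepCard_succ_le (f : ℕ → X → X) {γ : Set (X × X)} (hγ : γ ∈ 𝓤 X)
    {ι : Type*} [Fintype ι] (c : X → ι) (hc : ∀ x y, c x = c y → (x, y) ∈ γ) (k : ℕ) :
    sepCard f univ (k + 1) γ ≤ Fintype.card ι * sepCard (fun j => f (1 + j)) univ k γ := by
  classical
  refine csSup_le' ?_
  rintro _ ⟨E, -, hE, rfl⟩
  rw [mul_comm]
  refine (Finset.card_le_mul_card_image_of_maps_to (t := Finset.univ) (f := c)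
    (fun _ _ => Finset.mem_univ _) _ fun i _ => ?_).trans_eq (by rw [Finset.card_univ])
  set Ei := E.filter fun x => c x = i
  have hsep : ∀ x ∈ Ei, ∀ y ∈ Ei, x ≠ y → ∃ j < k,
      (itr (fun j => f (1 + j)) 0 j (f 0 x), itr (fun j => f (1 + j)) 0 j (f 0 y)) ∉ γ := by
    intro x hx y hy hxy
    simp only [Ei, Finset.mem_filter] at hx hy
    obtain ⟨_ | j, hj, hout⟩ := hE x hx.1 y hy.1 hxy
    · exact absurd (hc x y (hx.2.trans hy.2.symm)) hout
    · refine ⟨j, by omega, ?_⟩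
      rw [itr_succ', itr_succ'] at hout
      simpa [itr_shift] using hout
  have hinj : Set.InjOn (f 0) Ei := fun x hx y hy hxy => by
    by_contra hne
    obtain ⟨j, -, hj⟩ := hsep x hx y hy hne
    exact hj (by rw [hxy]; exact refl_mem_uniformity hγ)
  rw [← Finset.card_image_of_injOn hinj]
  refine card_le_sepCard hγ (subset_univ _) ?_
  simp only [IsSep, Finset.coe_image, mem_image, Finset.mem_coe]
  rintro _ ⟨x, hx, rfl⟩ _ ⟨y, hy, rfl⟩ hne
  exact hsep x hx y hy fun h => hne (h ▸ rfl)

end Compact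

theorem exists_itr_tracks_iterate [UniformSpace X] {f : ℕ → X → X} {F : X → X}
    (hF : UniformContinuous F) (hconv : ∀ γ ∈ 𝓤 X, ∃ N : ℕ, ∀ n ≥ N, ∀ x : X, (f n x, F x) ∈ γ)
    (m : ℕ) {η : Set (X × X)} (hη : η ∈ 𝓤 X) :
    ∃ N : ℕ, ∀ i ≥ N, ∀ x : X, ∀ j ≤ m, (itr f i j x, F^[j] x) ∈ η := by
  induction m generalizing η with
  | zero =>
    refine ⟨0, fun i _ x j hj => ?_⟩
    obtain rfl := Nat.le_zero.mp hj
    exact refl_mem_uniformity hη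
  | succ m ih =>
    obtain ⟨θ, hθ, hθη⟩ := comp_mem_uniformity_sets hη
    obtain ⟨N₁, hN₁⟩ := ih (inter_mem (hF hθ) hη)
    obtain ⟨N₂, hN₂⟩ := hconv θ hθ
    refine ⟨max N₁ N₂, fun i hi x j hj => ?_⟩
    rcases hj.lt_or_eq with hj | rfl
    · exact (hN₁ i (le_of_max_le_left hi) x j (Nat.lt_succ_iff.mp hj)).2
    -- one step of `f (i + m)` stays `θ`-close to `F`, which maps the `θ`-close pair
    -- `(itr f i m x, F^[m] x)` to a `θ`-close pair
    rw [Function.iterate_succ_apply']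
    exact hθη ⟨F (itr f i m x), hN₂ (i + m) (by omega) _,
      (hN₁ i (le_of_max_le_left hi) x m le_rfl).1⟩

noncomputable def entropyAt [UniformSpace X] (f : ℕ → X → X) (γ : Set (X × X)) : EReal :=
  atTop.limsup fun n : ℕ => ((Real.log (sepCard f univ n γ) / n : ℝ) : EReal)

theorem entropy_univ_eq_iSup_entropyAt [UniformSpace X] (f : ℕ → X → X) :
    entropy f univ = ⨆ γ ∈ 𝓤 X, entropyAt f γ :=
  rfl

section Entropy

variable [UniformSpace X] [CompactSpace X]

theorem entropyAt_le_entropyAt_shift (f : ℕ → X → X) {γ : Set (X × X)} (hγ : γ ∈ 𝓤 X) :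
    entropyAt f γ ≤ entropyAt (fun k => f (1 + k)) γ := by
  obtain ⟨t, c, hc⟩ := exists_finset_code hγ
  exact limsup_log_div_le_of_succ_le_mul _ (sepCard_succ_le f hγ c hc)

theorem monotone_entropyAt_shift (f : ℕ → X → X) {γ : Set (X × X)} (hγ : γ ∈ 𝓤 X) :
    Monotone fun n => entropyAt (fun k => f (n + k)) γ :=
  monotone_nat_of_le_succ fun n => by
    simpa only [← add_assoc] using entropyAt_le_entropyAt_shift (fun k => f (n + k)) hγ

theorem monotone_entropy_shift (f : ℕ → X → X) :
    Monotone fun n => entropy (fun k => f (n + k)) univ := fun _ _ hpq =>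
  iSup₂_mono fun _ hγ => monotone_entropyAt_shift f hγ hpq

theorem entropyAt_le_of_tracks {g : ℕ → X → X} {F : X → X} {γ η : Set (X × X)}
    (hη : η ∈ 𝓤 X) [SetRel.IsSymm η] (hηγ : (η ○ η) ○ (η ○ η) ⊆ γ) {m : ℕ} (hm : 0 < m)
    (htrack : ∀ i x, ∀ j < m, (itr g i j x, F^[j] x) ∈ η) :
    entropyAt g γ ≤ ((Real.log (sepCard (fun _ => F) univ m η) / m : ℝ) : EReal) := by
  obtain ⟨S, hcard, hS⟩ := exists_spans_card_eq_sepCard (fun _ => F) m hη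
  rw [← hcard]
  exact limsup_log_div_le_of_le_pow hm (sepCard_le_pow_of_tracks hηγ hm hS htrack)

theorem entropyAt_shift_le_entropy {f : ℕ → X → X} {F : X → X} (hF : UniformContinuous F)
    (hconv : ∀ γ ∈ 𝓤 X, ∃ N : ℕ, ∀ n ≥ N, ∀ x : X, (f n x, F x) ∈ γ) (n : ℕ)
    {γ : Set (X × X)} (hγ : γ ∈ 𝓤 X) :
    entropyAt (fun k => f (n + k)) γ ≤ entropy (fun _ => F) univ := by
  obtain ⟨β, hβ, -, hβγ⟩ := comp_symm_mem_uniformity_sets hγ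
  obtain ⟨η, hη, _, hηβ⟩ := comp_symm_mem_uniformity_sets hβ
  have hηγ : (η ○ η) ○ (η ○ η) ⊆ γ := (SetRel.comp_subset_comp hηβ hηβ).trans hβγ
  have hbound : ∀ᶠ m in atTop, entropyAt (fun k => f (n + k)) γ ≤
      ((Real.log (sepCard (fun _ => F) univ m η) / m : ℝ) : EReal) := by
    filter_upwards [eventually_gt_atTop 0] with m hm
    obtain ⟨N, hN⟩ := exists_itr_tracks_iterate hF hconv m hη
    calc entropyAt (fun k => f (n + k)) γ ≤ entropyAt (fun k => f (max n N + k)) γ :=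
          monotone_entropyAt_shift f hγ (le_max_left n N)
      _ ≤ _ := entropyAt_le_of_tracks hη hηγ hm fun i x j hj => by
          rw [itr_shift]
          exact hN _ (by omega) x j hj.le
  calc entropyAt (fun k => f (n + k)) γ
      ≤ atTop.liminf fun m : ℕ =>
          ((Real.log (sepCard (fun _ => F) univ m η) / m : ℝ) : EReal) :=
        le_liminf_of_le (h := hbound)
    _ ≤ entropyAt (fun _ => F) η := liminf_le_limsup
    _ ≤ entropy (fun _ => F) univ := by
        rw [entropy_univ_eq_iSup_entropyAt]
        exact le_iSup₂ (f := fun γ _ => entropyAt (fun _ => F) γ) η hη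

end Entropy

end

theorem entropy_shift_mono_le_limit_general {X : Type*} [UniformSpace X] [CompactSpace X]
    (f : ℕ → X → X) (F : X → X) (hF : Continuous F)
    (hconv : ∀ γ ∈ 𝓤 X, ∃ N : ℕ, ∀ n ≥ N, ∀ x : X, (f n x, F x) ∈ γ) :
    (∀ n : ℕ, entropy (fun k => f (n + k)) Set.univ ≤
        entropy (fun k => f (n + 1 + k)) Set.univ) ∧
      (⨆ n : ℕ, entropy (fun k => f (n + k)) Set.univ) ≤
        entropy (fun _ : ℕ => F) Set.univ := by
  have hFu : UniformContinuous F := CompactSpace.uniformContinuous_of_continuous hF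
  refine ⟨fun n => monotone_entropy_shift f n.le_succ, iSup_le fun n => ?_⟩
  rw [entropy_univ_eq_iSup_entropyAt]
  exact iSup₂_le fun γ hγ => entropyAt_shift_le_entropy hFu hconv n hγ

/-- If `f_{0,∞}` converges uniformly to a continuous map `F`, then the entropies of the
shifted systems `f_{n,∞}` are non-decreasing in `n` and are all bounded (hence so is their
limit, the asymptotical entropy `h*(f_∞) = ⨆ n, h(f_{n,∞})`) by the entropy of the
autonomous limit system `(X, F)`. -/
theorem entropy_shift_mono_le_limit {X : Type*} [UniformSpace X] [CompactSpace X]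
    (f : ℕ → X → X) (hf : ∀ n, Continuous (f n)) (F : X → X) (hF : Continuous F)
    (hconv : ∀ γ ∈ 𝓤 X, ∃ N : ℕ, ∀ n ≥ N, ∀ x : X, (f n x, F x) ∈ γ) :
    (∀ n : ℕ, entropy (fun k => f (n + k)) Set.univ ≤
        entropy (fun k => f (n + 1 + k)) Set.univ) ∧
      (⨆ n : ℕ, entropy (fun k => f (n + k)) Set.univ) ≤
        entropy (fun _ : ℕ => F) Set.univ :=
  entropy_shift_mono_le_limit_general f F hF hconv
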